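/- arXiv:2603.13646 — 2 statements merged into one kernel-verified Lean document; each statement's English description precedes it below -/
import Mathlib

section
/- If μ ~ N(m, C) is a D-dimensional Gaussian vector, A ∈ R^{P×D}, and Σ is symmetric positive definite, then Var[N(y | Aμ, Σ)] = 2^{-P/2} det(2πΣ)^{-1/2} N(y | Am, Σ/2 + A C A^T) − 2^{-P/2} det(2π(Σ + A C A^T))^{-1/2} N(y | Am, (Σ + A C A^T)/2). -/
/-!
Squaring `N(y | Ax, Σ)` gives a constant multiple of `N(y | Ax, Σ/2)`, so both moments reduce to
the marginal-likelihood identity `∫ N(x | m, C) N(y | Ax, Σ) dx = N(y | Am, Σ + ACAᵀ)`. That one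
follows by completing the square in `x` around the posterior precision `Λ = C⁻¹ + AᵀΣ⁻¹A`: the
Woodbury identity identifies the remainder with the quadratic form of `(Σ + ACAᵀ)⁻¹`, and the
matrix determinant lemma `det (Σ + ACAᵀ) = det Σ · det C · det Λ` matches the normalizations.
-/

open Matrix Real MeasureTheory

/-- Multivariate Gaussian density `N(y | m, C)`. -/
noncomputable def gaussPdf {n : Type*} [Fintype n] [DecidableEq n]
    (y m : n → ℝ) (C : Matrix n n ℝ) : ℝ :=
  (Real.sqrt (((2 * Real.pi) • C).det))⁻¹ *
    Real.exp (-(1 / 2) * ((y - m) ⬝ᵥ C⁻¹.mulVec (y - m)))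

namespace Matrix

variable {ι κ R : Type*} [Fintype ι] [Fintype κ]

theorem IsSymm.dotProduct_mulVec_comm [CommRing R] {M : Matrix ι ι R} (hM : M.IsSymm)
    (x y : ι → R) : x ⬝ᵥ M *ᵥ y = y ⬝ᵥ M *ᵥ x := by
  conv_lhs => rw [← hM.eq]
  exact dotProduct_transpose_mulVec M x y

variable [DecidableEq ι] [DecidableEq κ]

theorem det_add_mul_mul [CommRing R] {S : Matrix κ κ R} {C : Matrix ι ι R} (U : Matrix κ ι R)
    (V : Matrix ι κ R) (hS : IsUnit S.det) (hC : IsUnit C.det) :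
    (S + U * C * V).det = S.det * C.det * (C⁻¹ + V * S⁻¹ * U).det := by
  have hfactor : 1 + V * S⁻¹ * (U * C) = (C⁻¹ + V * S⁻¹ * U) * C := by
    rw [Matrix.add_mul, nonsing_inv_mul C hC, Matrix.mul_assoc (V * S⁻¹)]
  rw [det_add_mul (U * C) V hS, hfactor, det_mul]
  ring

theorem dotProduct_mulVec_sub_inv_mulVec [CommRing R] {Λ : Matrix ι ι R} (hΛ : Λ.IsSymm)
    (hdet : IsUnit Λ.det) (x b : ι → R) :
    (x - Λ⁻¹ *ᵥ b) ⬝ᵥ Λ *ᵥ (x - Λ⁻¹ *ᵥ b) = x ⬝ᵥ Λ *ᵥ x - 2 * (x ⬝ᵥ b) + b ⬝ᵥ Λ⁻¹ *ᵥ b := by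
  have hcancel : Λ *ᵥ (Λ⁻¹ *ᵥ b) = b := by
    rw [mulVec_mulVec, mul_nonsing_inv Λ hdet, one_mulVec]
  rw [mulVec_sub, sub_dotProduct, dotProduct_sub, dotProduct_sub, hcancel,
    hΛ.dotProduct_mulVec_comm (Λ⁻¹ *ᵥ b), hcancel, dotProduct_comm (Λ⁻¹ *ᵥ b) b]
  ring

theorem PosDef.inv_add_transpose_mul_inv_mul {S : Matrix κ κ ℝ} {C : Matrix ι ι ℝ}
    (hC : C.PosDef) (hS : S.PosDef) (A : Matrix κ ι ℝ) : (C⁻¹ + Aᵀ * S⁻¹ * A).PosDef := by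
  simpa using hC.inv.add_posSemidef (hS.inv.posSemidef.conjTranspose_mul_mul_same A)

theorem dotProduct_inv_mulVec_add_dotProduct_inv_mulVec_sub {C : Matrix ι ι ℝ}
    {S : Matrix κ κ ℝ} (hC : C.PosDef) (hS : S.PosDef) (A : Matrix κ ι ℝ) (x : ι → ℝ)
    (d : κ → ℝ) :
    x ⬝ᵥ C⁻¹ *ᵥ x + (d - A *ᵥ x) ⬝ᵥ S⁻¹ *ᵥ (d - A *ᵥ x) =
      (x - (C⁻¹ + Aᵀ * S⁻¹ * A)⁻¹ *ᵥ (Aᵀ *ᵥ S⁻¹ *ᵥ d)) ⬝ᵥ (C⁻¹ + Aᵀ * S⁻¹ * A) *ᵥ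
          (x - (C⁻¹ + Aᵀ * S⁻¹ * A)⁻¹ *ᵥ (Aᵀ *ᵥ S⁻¹ *ᵥ d)) +
        d ⬝ᵥ (S + A * C * Aᵀ)⁻¹ *ᵥ d := by
  have hΛ := hC.inv_add_transpose_mul_inv_mul hS A
  have hSi : S⁻¹.IsSymm := isHermitian_iff_isSymm.1 hS.inv.isHermitian
  set Λ := C⁻¹ + Aᵀ * S⁻¹ * A
  set b := Aᵀ *ᵥ S⁻¹ *ᵥ d
  have hxΛx : x ⬝ᵥ Λ *ᵥ x = x ⬝ᵥ C⁻¹ *ᵥ x + A *ᵥ x ⬝ᵥ S⁻¹ *ᵥ (A *ᵥ x) := by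
    rw [add_mulVec, dotProduct_add, ← mulVec_mulVec, ← mulVec_mulVec, dotProduct_transpose_mulVec,
      dotProduct_comm (S⁻¹ *ᵥ _)]
  have hxb : x ⬝ᵥ b = A *ᵥ x ⬝ᵥ S⁻¹ *ᵥ d := by
    rw [dotProduct_transpose_mulVec, dotProduct_comm]
  have hWoodbury : d ⬝ᵥ (S + A * C * Aᵀ)⁻¹ *ᵥ d = d ⬝ᵥ S⁻¹ *ᵥ d - b ⬝ᵥ Λ⁻¹ *ᵥ b := by
    rw [add_mul_mul_inv_eq_sub S A C Aᵀ hS.isUnit hC.isUnit hΛ.isUnit, sub_mulVec,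
      dotProduct_sub]
    congr 1
    simp only [← mulVec_mulVec]
    rw [hSi.dotProduct_mulVec_comm d (A *ᵥ _), dotProduct_comm (A *ᵥ _),
      ← dotProduct_transpose_mulVec, dotProduct_comm]
  rw [dotProduct_mulVec_sub_inv_mulVec (isHermitian_iff_isSymm.1 hΛ.isHermitian)
    hΛ.det_pos.ne'.isUnit x b, hxΛx, hxb, hWoodbury, mulVec_sub, dotProduct_sub, sub_dotProduct,
    sub_dotProduct, hSi.dotProduct_mulVec_comm d (A *ᵥ x)]
  ring

end Matrix

variable {ι κ : Type*} [Fintype ι] [Fintype κ]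

theorem integral_exp_neg_half_dotProduct_self :
    ∫ x : ι → ℝ, exp (-(1 / 2) * (x ⬝ᵥ x)) = (2 * π) ^ ((Fintype.card ι : ℝ) / 2) := by
  rw [← (EuclideanSpace.volume_preserving_symm_measurableEquiv_toLp ι).integral_comp',
    show 2 * π = π / (1 / 2) by ring, ← finrank_euclideanSpace (𝕜 := ℝ),
    ← GaussianFourier.integral_rexp_neg_mul_sq_norm (by norm_num)]
  congr! 3 with v
  rw [EuclideanSpace.real_norm_sq_eq]
  simp [dotProduct, sq]

variable [DecidableEq ι] [DecidableEq κ]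

theorem integral_comp_mulVec {E : Type*} [NormedAddCommGroup E] [NormedSpace ℝ E]
    {Q : Matrix ι ι ℝ} (hQ : Q.det ≠ 0) (g : (ι → ℝ) → E) :
    ∫ x, g (Q *ᵥ x) = |Q.det|⁻¹ • ∫ y, g y := by
  have hemb : MeasurableEmbedding (toLin' Q) :=
    ((toLin' Q).isClosedEmbedding_of_injective <| ker_mulVecLin_eq_bot_iff.2 fun v hv ↦
      mulVec_injective_of_det_ne_zero hQ (hv.trans (mulVec_zero Q).symm)).measurableEmbedding
  rw [← abs_inv, ← ENNReal.toReal_ofReal (abs_nonneg _), ← integral_smul_measure,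
    ← Real.map_matrix_volume_pi_eq_smul_volume_pi hQ, hemb.integral_map, toLin'_apply']
  rfl

open scoped MatrixOrder in
theorem integral_exp_neg_half_posDef {Λ : Matrix ι ι ℝ} (hΛ : Λ.PosDef) (v : ι → ℝ) :
    ∫ x, exp (-(1 / 2) * ((x - v) ⬝ᵥ Λ *ᵥ (x - v)))
      = (2 * π) ^ ((Fintype.card ι : ℝ) / 2) / √Λ.det := by
  rw [integral_sub_right_eq_self (fun x ↦ exp (-(1 / 2) * (x ⬝ᵥ Λ *ᵥ x))) v]
  obtain ⟨B, rfl⟩ := CStarAlgebra.nonneg_iff_eq_star_mul_self.mp hΛ.posSemidef.nonneg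
  have hdet : (star B * B).det = B.det ^ 2 := by
    rw [det_mul, star_eq_conjTranspose, det_conjTranspose, star_trivial, sq]
  have hB : B.det ≠ 0 := pow_ne_zero_iff two_ne_zero |>.1 (hdet ▸ hΛ.det_pos).ne'
  have hquad (x : ι → ℝ) : x ⬝ᵥ (star B * B) *ᵥ x = B *ᵥ x ⬝ᵥ B *ᵥ x := by
    rw [← mulVec_mulVec, dotProduct_mulVec, star_eq_conjTranspose, vecMul_conjTranspose]
    simp only [star_trivial]
  simp_rw [hquad]
  rw [integral_comp_mulVec hB (fun u ↦ exp (-(1 / 2) * (u ⬝ᵥ u))),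
    integral_exp_neg_half_dotProduct_self, hdet, Real.sqrt_sq_eq_abs, smul_eq_mul, inv_mul_eq_div]

theorem sqrt_det_smul (M : Matrix ι ι ℝ) {c : ℝ} (hc : 0 ≤ c) :
    √(c • M).det = c ^ ((Fintype.card ι : ℝ) / 2) * √M.det := by
  rw [det_smul, Real.sqrt_mul (by positivity), Real.sqrt_eq_rpow, ← Real.rpow_natCast,
    ← Real.rpow_mul hc]
  ring_nf

theorem gaussPdf_sq (y m : ι → ℝ) (S : Matrix ι ι ℝ) :
    gaussPdf y m S ^ 2 = 2 ^ (-(Fintype.card ι : ℝ) / 2) * (√((2 * π) • S).det)⁻¹ *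
      gaussPdf y m ((1 / 2 : ℝ) • S) := by
  have hπ : 0 < π := pi_pos
  have h2π : (2 * π) ^ ((Fintype.card ι : ℝ) / 2) =
      2 ^ ((Fintype.card ι : ℝ) / 2) * π ^ ((Fintype.card ι : ℝ) / 2) :=
    mul_rpow zero_le_two hπ.le
  simp only [gaussPdf, smul_smul, show 2 * π * (1 / 2) = π by ring, sqrt_det_smul _ hπ.le,
    sqrt_det_smul _ (by positivity : 0 ≤ 2 * π), h2π, neg_div, rpow_neg zero_le_two]
  -- `√` truncates at `0`, so for `det S ≤ 0` both sides vanish.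
  rcases (Real.sqrt_nonneg S.det).eq_or_lt with h | h
  · simp [← h]
  have hS : IsUnit S.det := (Real.sqrt_pos.1 h).ne'.isUnit
  have hinv : ((1 / 2 : ℝ) • S)⁻¹ = (2 : ℝ) • S⁻¹ := by
    refine inv_eq_right_inv ?_
    rw [smul_mul_smul_comm, mul_nonsing_inv S hS]
    norm_num
  have hexp (q : ℝ) : exp (-(1 / 2) * (2 * q)) = exp (-(1 / 2) * q) ^ 2 := by
    rw [← exp_nat_mul]; ring_nf
  simp only [hinv, smul_mulVec, dotProduct_smul, smul_eq_mul, hexp]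
  have : 0 < (2:ℝ) ^ ((Fintype.card ι : ℝ) / 2) := by positivity
  have : 0 < π ^ ((Fintype.card ι : ℝ) / 2) := by positivity
  field_simp

theorem integral_gaussPdf_mul_gaussPdf_mulVec {C : Matrix ι ι ℝ} {S : Matrix κ κ ℝ}
    (hC : C.PosDef) (hS : S.PosDef) (m : ι → ℝ) (A : Matrix κ ι ℝ) (y : κ → ℝ) :
    ∫ x, gaussPdf x m C * gaussPdf y (A *ᵥ x) S = gaussPdf y (A *ᵥ m) (S + A * C * Aᵀ) := by
  have hΛ := hC.inv_add_transpose_mul_inv_mul hS A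
  set d := y - A *ᵥ m
  set Λ := C⁻¹ + Aᵀ * S⁻¹ * A
  set μ := Λ⁻¹ *ᵥ (Aᵀ *ᵥ S⁻¹ *ᵥ d)
  set T := S + A * C * Aᵀ
  have hpt (x : ι → ℝ) : gaussPdf (x + m) m C * gaussPdf y (A *ᵥ (x + m)) S =
      (√((2 * π) • C).det)⁻¹ * (√((2 * π) • S).det)⁻¹ * exp (-(1 / 2) * (d ⬝ᵥ T⁻¹ *ᵥ d)) *
        exp (-(1 / 2) * ((x - μ) ⬝ᵥ Λ *ᵥ (x - μ))) := by
    have hres : y - A *ᵥ (x + m) = d - A *ᵥ x := by rw [mulVec_add, sub_add_eq_sub_sub_swap]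
    simp only [gaussPdf, add_sub_cancel_right, hres]
    rw [mul_mul_mul_comm, ← exp_add, ← mul_add,
      dotProduct_inv_mulVec_add_dotProduct_inv_mulVec_sub hC hS A x d, mul_add, exp_add]
    ring
  have hdet : √T.det = √S.det * √C.det * √Λ.det := by
    rw [det_add_mul_mul A Aᵀ hS.det_pos.ne'.isUnit hC.det_pos.ne'.isUnit,
      Real.sqrt_mul (mul_pos hS.det_pos hC.det_pos).le, Real.sqrt_mul hS.det_pos.le]
  rw [← integral_add_right_eq_self _ m]
  simp_rw [hpt]
  rw [integral_const_mul, integral_exp_neg_half_posDef hΛ]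
  have h2π : (0 : ℝ) ≤ 2 * π := by positivity
  simp only [gaussPdf, sqrt_det_smul _ h2π, hdet]
  have := hC.det_pos
  have := hS.det_pos
  have := hΛ.det_pos
  field_simp
  rfl

theorem variance_gaussPdf_affine_general {D P : ℕ}
    (m : Fin D → ℝ) (C : Matrix (Fin D) (Fin D) ℝ) (hC : C.PosDef)
    (A : Matrix (Fin P) (Fin D) ℝ)
    (S : Matrix (Fin P) (Fin P) ℝ) (hS : S.PosDef)
    (y : Fin P → ℝ) :
    (∫ x : Fin D → ℝ, gaussPdf x m C * gaussPdf y (A.mulVec x) S ^ 2) -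
      (∫ x : Fin D → ℝ, gaussPdf x m C * gaussPdf y (A.mulVec x) S) ^ 2 =
      (2 : ℝ) ^ (-(P : ℝ) / 2) * (Real.sqrt (((2 * Real.pi) • S).det))⁻¹ *
          gaussPdf y (A.mulVec m) ((1 / 2 : ℝ) • S + A * C * Aᵀ) -
        (2 : ℝ) ^ (-(P : ℝ) / 2) *
            (Real.sqrt (((2 * Real.pi) • (S + A * C * Aᵀ)).det))⁻¹ *
          gaussPdf y (A.mulVec m) ((1 / 2 : ℝ) • (S + A * C * Aᵀ)) := by
  simp_rw [gaussPdf_sq y (A *ᵥ _) S, mul_left_comm (gaussPdf _ m C), Fintype.card_fin]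
  rw [integral_const_mul, integral_gaussPdf_mul_gaussPdf_mulVec hC (hS.smul (by norm_num)),
    integral_gaussPdf_mul_gaussPdf_mulVec hC hS, gaussPdf_sq, Fintype.card_fin]

/-- If `μ ~ N(m, C)`, `A` a fixed matrix, `Σ` SPD and `Σ + ACAᵀ` positive definite, then
`Var[N(y | Aμ, Σ)] = 2^{-P/2} det(2πΣ)^{-1/2} N(y | Am, Σ/2 + ACAᵀ)
  − 2^{-P/2} det(2π(Σ + ACAᵀ))^{-1/2} N(y | Am, (Σ + ACAᵀ)/2)`. -/
theorem variance_gaussPdf_affine {D P : ℕ}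
    (m : Fin D → ℝ) (C : Matrix (Fin D) (Fin D) ℝ) (hC : C.PosDef)
    (A : Matrix (Fin P) (Fin D) ℝ)
    (S : Matrix (Fin P) (Fin P) ℝ) (hS : S.PosDef)
    (hSum : (S + A * C * Aᵀ).PosDef) (y : Fin P → ℝ) :
    (∫ x : Fin D → ℝ, gaussPdf x m C * gaussPdf y (A.mulVec x) S ^ 2) -
      (∫ x : Fin D → ℝ, gaussPdf x m C * gaussPdf y (A.mulVec x) S) ^ 2 =
      (2 : ℝ) ^ (-(P : ℝ) / 2) * (Real.sqrt (((2 * Real.pi) • S).det))⁻¹ *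
          gaussPdf y (A.mulVec m) ((1 / 2 : ℝ) • S + A * C * Aᵀ) -
        (2 : ℝ) ^ (-(P : ℝ) / 2) *
            (Real.sqrt (((2 * Real.pi) • (S + A * C * Aᵀ)).det))⁻¹ *
          gaussPdf y (A.mulVec m) ((1 / 2 : ℝ) • (S + A * C * Aᵀ)) :=
  variance_gaussPdf_affine_general m C hC A S hS y
end

section
/- Expected conditional variance for a Gaussian log-likelihood emulator: with updated GP mean μ_{N+B}^{X,y}(θ) ~ N(μ_N(θ), σ²_N(θ) − σ²_{N+B}(θ)) over random responses y and updated variance σ²_{N+B}(θ) deterministic, the expectation over y of Var[π₀(θ) exp(f_{N+B}(θ)) | X, y] equals π₀(θ)² exp(2μ_N(θ) + σ²_{N+B}(θ)) (exp(σ²_{N+B}(θ)) − 1) · exp(2(σ²_N(θ) − σ²_{N+B}(θ))). -/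
open MeasureTheory ProbabilityTheory Real NNReal

lemma gaussianPDFReal_mul_exp (μ : ℝ) {v : ℝ≥0} (hv : v ≠ 0) (x : ℝ) :
    Real.exp (2 * x) * gaussianPDFReal μ v x
      = Real.exp (2 * μ + 2 * v) * gaussianPDFReal (μ + 2 * v) v x := by
  have hv' : (0:ℝ) < v := by positivity
  rw [gaussianPDFReal, gaussianPDFReal]
  rw [mul_left_comm, ← Real.exp_add, mul_left_comm, ← Real.exp_add]
  congr 2
  field_simp
  ring

lemma integral_exp_two_mul_gaussianReal (μ : ℝ) (v : ℝ≥0) :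
    ∫ x, Real.exp (2 * x) ∂(gaussianReal μ v) = Real.exp (2 * μ + 2 * v) := by
  by_cases hv : v = 0
  · simp [hv]
  · rw [gaussianReal_of_var_ne_zero μ hv]
    have hd : gaussianPDF μ v = fun x => ((Real.toNNReal (gaussianPDFReal μ v x) : ℝ≥0) : ENNReal) :=
      rfl
    rw [hd, integral_withDensity_eq_integral_smul
      ((measurable_gaussianPDFReal μ v).real_toNNReal) (fun x => Real.exp (2 * x))]
    have heq : ∀ x : ℝ, (Real.toNNReal (gaussianPDFReal μ v x) : ℝ≥0) • Real.exp (2 * x)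
        = Real.exp (2 * μ + 2 * v) * gaussianPDFReal (μ + 2 * v) v x := by
      intro x
      rw [NNReal.smul_def, smul_eq_mul, Real.coe_toNNReal _ (gaussianPDFReal_nonneg μ v x),
        mul_comm, gaussianPDFReal_mul_exp μ hv x]
    simp_rw [heq]
    rw [integral_const_mul, integral_gaussianPDFReal_eq_one _ hv, mul_one]

/-- Expected conditional variance for a Gaussian log-likelihood emulator.
Conditionally on the new data `(X, y)`, the updated GP gives
`Var[π₀ exp(f_{N+B}(θ)) | X, y] = π₀² (exp(σ²_{N+B}) − 1) exp(2 μ_{N+B}^{X,y}(θ) + σ²_{N+B})`,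
and marginally `μ_{N+B}^{X,y}(θ) ~ N(μ_N(θ), σ²_N(θ) − σ²_{N+B}(θ))`.  Taking the
expectation over the random responses `y` yields
`π₀² exp(2μ_N + σ²_{N+B}) (exp(σ²_{N+B}) − 1) exp(2(σ²_N − σ²_{N+B}))`. -/
theorem expected_conditional_variance_logGaussian
    (π₀ μN vN vNB : ℝ) (hπ₀ : 0 < π₀) (hvNB : 0 ≤ vNB)
    (w : ℝ≥0) (hw : (w : ℝ) = vN - vNB) :
    ∫ m, π₀ ^ 2 * (Real.exp vNB - 1) * Real.exp (2 * m + vNB)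
        ∂(gaussianReal μN w) =
      π₀ ^ 2 * Real.exp (2 * μN + vNB) * (Real.exp vNB - 1) *
        Real.exp (2 * (vN - vNB)) := by
  have key := integral_exp_two_mul_gaussianReal μN w
  calc ∫ m, π₀ ^ 2 * (Real.exp vNB - 1) * Real.exp (2 * m + vNB) ∂(gaussianReal μN w)
      = ∫ m, (π₀ ^ 2 * (Real.exp vNB - 1) * Real.exp vNB) * Real.exp (2 * m)
          ∂(gaussianReal μN w) := by
        congr 1; ext m; rw [Real.exp_add]; ring
    _ = (π₀ ^ 2 * (Real.exp vNB - 1) * Real.exp vNB) * Real.exp (2 * μN + 2 * w) := by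
        rw [integral_const_mul, key]
    _ = _ := by
        rw [hw, Real.exp_add, Real.exp_add]
        ring
end
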